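/- Let Φ(ξ,η) = √(|ξ|²+1) − √(2|ξ−η|²+4) + √(|η|²+1). For every real l ≥ 1000 and all ξ, η ∈ ℝ² with |ξ| ≤ 2^{−3l+1} and |η| ≥ 2^{−0.99l}, the gradient ∇_ηΦ(ξ,η) = 2(ξ−η)/√(2|ξ−η|²+4) + η/√(|η|²+1) is nonzero. (This is Corollary 2.2: for |ξ| ∼ 2^{−3l} and |η| ≥ 2^{−l+δl} with δ = 0.01 the phase has no critical point in η.) -/
import Mathlib


noncomputable def gradPhi (ξ η : EuclideanSpace ℝ (Fin 2)) : EuclideanSpace ℝ (Fin 2) :=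
  (2 / Real.sqrt (2 * ‖ξ - η‖ ^ 2 + 4)) • (ξ - η) + (1 / Real.sqrt (‖η‖ ^ 2 + 1)) • η

set_option maxHeartbeats 1000000 in
theorem no_critical_point_large_eta :
    ∀ l : ℝ, 1000 ≤ l → ∀ ξ η : EuclideanSpace ℝ (Fin 2),
      ‖ξ‖ ≤ (2 : ℝ) ^ (-3 * l + 1) → (2 : ℝ) ^ (-0.99 * l) ≤ ‖η‖ →
      gradPhi ξ η ≠ 0 := by
  intro l hl ξ η hξ hη h
  set a := ‖η‖ with ha_def
  set b := ‖ξ - η‖ with hb_def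
  set ε := ‖ξ‖ with hε_def
  have hεnn : 0 ≤ ε := norm_nonneg _
  have hbnn : 0 ≤ b := norm_nonneg _
  have hA : (0:ℝ) < (2:ℝ) ^ (-0.99 * l) := Real.rpow_pos_of_pos (by norm_num) _
  have ha : 0 < a := lt_of_lt_of_le hA hη
  -- numeric facts
  have hnum1 : 8 * (2:ℝ) ^ (-3 * l + 1) ≤ (2:ℝ) ^ (-0.99 * l) := by
    have h8 : (8:ℝ) = (2:ℝ) ^ (3:ℝ) := by
      rw [show (3:ℝ) = ((3:ℕ):ℝ) by norm_num, Real.rpow_natCast]; norm_num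
    rw [h8, ← Real.rpow_add (by norm_num : (0:ℝ) < 2)]
    apply Real.rpow_le_rpow_left_iff (by norm_num : (1:ℝ) < 2) |>.mpr
    nlinarith
  have hnum2 : 8 * (2:ℝ) ^ (-3 * l + 1) ≤ ((2:ℝ) ^ (-0.99 * l)) ^ 3 := by
    have h8 : (8:ℝ) = (2:ℝ) ^ (3:ℝ) := by
      rw [show (3:ℝ) = ((3:ℕ):ℝ) by norm_num, Real.rpow_natCast]; norm_num
    have hc : ((2:ℝ) ^ (-0.99 * l)) ^ (3:ℕ) = (2:ℝ) ^ ((-0.99 * l) * 3) := by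
      rw [← Real.rpow_natCast ((2:ℝ) ^ (-0.99 * l)) 3, ← Real.rpow_mul (by norm_num : (0:ℝ) ≤ 2)]
      norm_num
    rw [hc, h8, ← Real.rpow_add (by norm_num : (0:ℝ) < 2)]
    apply Real.rpow_le_rpow_left_iff (by norm_num : (1:ℝ) < 2) |>.mpr
    nlinarith
  have h8a : 8 * ε ≤ a := by
    calc 8 * ε ≤ 8 * (2:ℝ) ^ (-3 * l + 1) := by linarith
    _ ≤ (2:ℝ) ^ (-0.99 * l) := hnum1
    _ ≤ a := hη
  have h8a3 : 8 * ε ≤ a ^ 3 := by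
    calc 8 * ε ≤ 8 * (2:ℝ) ^ (-3 * l + 1) := by linarith
    _ ≤ ((2:ℝ) ^ (-0.99 * l)) ^ 3 := hnum2
    _ ≤ a ^ 3 := pow_le_pow_left₀ hA.le hη 3
  -- lower bound on b
  have hba : a - ε ≤ b := by
    have := norm_sub_norm_le η ξ
    rw [norm_sub_rev] at this
    linarith
  -- set sqrt quantities
  set t := Real.sqrt (a ^ 2 + 1) with ht_def
  set s := Real.sqrt (2 * b ^ 2 + 4) with hs_def
  have ht2 : t ^ 2 = a ^ 2 + 1 := Real.sq_sqrt (by positivity)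
  have hs2 : s ^ 2 = 2 * b ^ 2 + 4 := Real.sq_sqrt (by positivity)
  have htpos : 0 < t := Real.sqrt_pos.mpr (by positivity)
  have hspos : 0 < s := Real.sqrt_pos.mpr (by positivity)
  -- from gradPhi = 0
  unfold gradPhi at h
  rw [add_eq_zero_iff_eq_neg] at h
  have hn : ‖(2 / s) • (ξ - η)‖ = ‖(1 / t) • η‖ := by rw [h, norm_neg]
  rw [norm_smul, norm_smul] at hn
  have hn' : (2 / s) * b = (1 / t) * a := by
    simpa [Real.norm_eq_abs, abs_of_pos, abs_of_nonneg (le_of_lt hspos),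
      abs_of_nonneg (le_of_lt htpos), abs_div, abs_of_pos hspos, abs_of_pos htpos] using hn
  have h1 : 2 * b * t = a * s := by
    field_simp at hn'
    linarith
  have h3 : 4 * b ^ 2 * (a ^ 2 + 1) = a ^ 2 * (2 * b ^ 2 + 4) := by
    calc 4 * b ^ 2 * (a ^ 2 + 1) = (2 * b * t) ^ 2 := by rw [← ht2]; ring
    _ = (a * s) ^ 2 := by rw [h1]
    _ = a ^ 2 * (2 * b ^ 2 + 4) := by rw [← hs2]; ring
  have hkey : b ^ 2 * (a ^ 2 + 2) = 2 * a ^ 2 := by linear_combination h3 / 2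
  -- contradiction
  have habε : 0 ≤ a - ε := by linarith
  have hb2 : (a - ε) ^ 2 ≤ b ^ 2 := by nlinarith
  nlinarith [mul_le_mul_of_nonneg_right hb2 (by positivity : (0:ℝ) ≤ a ^ 2 + 2),
    mul_le_mul_of_nonneg_right h8a (by positivity : (0:ℝ) ≤ a ^ 3),
    mul_le_mul_of_nonneg_right h8a3 ha.le,
    sq_nonneg ε, mul_nonneg (sq_nonneg ε) (sq_nonneg a), pow_pos ha 4]
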